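/- arXiv:1001.3860 — 4 statements merged into one kernel-verified Lean document; each statement's English description precedes it below -/
import Mathlib

section
/- Let (ΛV, d) be a minimal CDGA generated in degree 1 over a field k (char ≠ 2), and let W₁ = ker(d) ∩ V. If V ≠ W₁ then dim W₁ ≥ 2; moreover, if dim W₁ = 2 then dim(W₂/W₁) = 1 and the induced map d̄ : W₂/W₁ → Λ²W₁ is an isomorphism. -/
open ExteriorAlgebra Module

/-- `Λ²U ⊆ ΛV`: the image of `Λ²` of a subspace `U ⊆ V` inside the exterior algebra,
i.e. the span of products of two elements of `U`. -/
noncomputable def lambdaTwo {k V : Type} [Field k] [AddCommGroup V] [Module k V]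
    (U : Submodule k V) : Submodule k (ExteriorAlgebra k V) :=
  U.map (ι k) * U.map (ι k)

/-- The canonical filtration of `V` associated to a minimal CDGA `(ΛV, d)` generated in
degree 1: `W₀ = 0`, `W₁ = ker d`, and `W_{n+1} = d⁻¹(Λ²Wₙ)`. -/
noncomputable def Wfilt {k V : Type} [Field k] [AddCommGroup V] [Module k V]
    (d : V →ₗ[k] ExteriorAlgebra k V) : ℕ → Submodule k V
  | 0 => ⊥
  | n + 1 => Submodule.comap d (lambdaTwo (Wfilt d n))

section aux

variable {k V : Type} [Field k] [AddCommGroup V] [Module k V]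

lemma lambdaTwo_bot : lambdaTwo (⊥ : Submodule k V) = ⊥ := by
  simp [lambdaTwo]

lemma lambdaTwo_mono {U U' : Submodule k V} (h : U ≤ U') : lambdaTwo U ≤ lambdaTwo U' :=
  mul_le_mul' (Submodule.map_mono h) (Submodule.map_mono h)

lemma Wfilt_one (d : V →ₗ[k] ExteriorAlgebra k V) : Wfilt d 1 = LinearMap.ker d := by
  show Submodule.comap d (lambdaTwo (⊥ : Submodule k V)) = _
  rw [lambdaTwo_bot]
  rfl

lemma Wfilt_one_le_two (d : V →ₗ[k] ExteriorAlgebra k V) : Wfilt d 1 ≤ Wfilt d 2 := by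
  show Submodule.comap d (lambdaTwo (Wfilt d 0)) ≤ Submodule.comap d (lambdaTwo (Wfilt d 1))
  exact Submodule.comap_mono (lambdaTwo_mono bot_le)

lemma lambdaTwo_eq_bot_of_le_span {U : Submodule k V} {w : V} (h : U ≤ k ∙ w) :
    lambdaTwo U = ⊥ := by
  have h1 : U.map (ι k) ≤ k ∙ (ι k w) := by
    refine le_trans (Submodule.map_mono h) ?_
    rw [Submodule.map_span, Set.image_singleton]
  have h2 : lambdaTwo U ≤ (k ∙ (ι k w)) * (k ∙ (ι k w)) := mul_le_mul' h1 h1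
  rw [Submodule.span_mul_span, Set.singleton_mul_singleton, ι_sq_zero,
    Submodule.span_zero_singleton] at h2
  exact le_bot_iff.mp h2

lemma lambdaTwo_span_pair (x y : V) :
    lambdaTwo (Submodule.span k {x, y}) = k ∙ (ι k x * ι k y) := by
  unfold lambdaTwo
  rw [Submodule.map_span, Set.image_pair, Submodule.span_mul_span]
  apply le_antisymm
  · rw [Submodule.span_le]
    rintro z hz
    rw [Set.mem_mul] at hz
    obtain ⟨a, ha, b, hb, rfl⟩ := hz
    have hswap : ι k y * ι k x = -(ι k x * ι k y) :=
      eq_neg_of_add_eq_zero_right (by rw [add_comm]; exact ι_add_mul_swap (R := k) y x)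
    rcases Set.mem_insert_iff.mp ha with rfl | ha <;>
      rcases Set.mem_insert_iff.mp hb with rfl | hb
    · rw [ι_sq_zero]; exact Submodule.zero_mem _
    · rw [Set.mem_singleton_iff] at hb; subst hb
      exact Submodule.mem_span_singleton_self _
    · rw [Set.mem_singleton_iff] at ha; subst ha
      rw [hswap]
      exact Submodule.neg_mem _ (Submodule.mem_span_singleton_self _)
    · rw [Set.mem_singleton_iff] at ha hb; subst ha; subst hb
      rw [ι_sq_zero]; exact Submodule.zero_mem _
  · rw [Submodule.span_le]
    rintro z rfl
    exact Submodule.subset_span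
      (Set.mul_mem_mul (Set.mem_insert _ _) (Set.mem_insert_of_mem _ rfl))

lemma Wfilt_stab (d : V →ₗ[k] ExteriorAlgebra k V) (h : Wfilt d 2 = Wfilt d 1) :
    ∀ n : ℕ, Wfilt d (n + 1) = Wfilt d 1
  | 0 => rfl
  | n + 1 => by
    show Submodule.comap d (lambdaTwo (Wfilt d (n + 1))) = _
    rw [Wfilt_stab d h n]
    exact h

lemma span_pair_of_finrank_two [FiniteDimensional k V] {U : Submodule k V}
    (h : finrank k U = 2) : ∃ x y : V, U = Submodule.span k {x, y} := by
  obtain b := finBasisOfFinrankEq k U h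
  refine ⟨(b 0 : V), (b 1 : V), ?_⟩
  have h1 : (Set.range fun i : Fin 2 => ((b i : V))) = {(b 0 : V), (b 1 : V)} := by
    ext v
    simp [Fin.exists_fin_two, eq_comm]
  rw [← h1]
  have : (Set.range fun i : Fin 2 => ((b i : V))) = U.subtype '' Set.range b := by
    rw [← Set.range_comp]; rfl
  rw [this, ← Submodule.map_span, b.span_eq, Submodule.map_top, Submodule.range_subtype]

end aux

/-- Let `(ΛV, d)` be a minimal CDGA generated in degree 1 over a field
`k` with `char k ≠ 2`, `dim V ≥ 2`, with canonical filtration `W₁ = ker d ∩ V`,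
`W₂ = d⁻¹(Λ²W₁) ∩ V` (minimality: the filtration exhausts `V`).  If `V ≠ W₁` (i.e. `d`
is not identically zero on `V`), then `dim W₁ ≥ 2`; moreover if `dim W₁ = 2` then
`dim(W₂/W₁) = 1` and the induced map `d̄ : W₂/W₁ → Λ²W₁` is an isomorphism
(it is injective — `v ∈ W₂` with `dv = 0` lies in `W₁` — and surjective:
`d(W₂) = Λ²W₁`). -/
theorem Wfilt_dim_bounds (k V : Type) [Field k] (hk : (2 : k) ≠ 0)
    [AddCommGroup V] [Module k V] [FiniteDimensional k V]
    (hdim : 2 ≤ finrank k V)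
    (d : V →ₗ[k] ExteriorAlgebra k V)
    (hd : ∀ v : V, d v ∈ lambdaTwo (⊤ : Submodule k V))
    (hmin : ∃ N, Wfilt d N = ⊤)
    (hne : Wfilt d 1 ≠ ⊤) :
    2 ≤ finrank k (Wfilt d 1) ∧
    (finrank k (Wfilt d 1) = 2 →
      finrank k (Wfilt d 2) = finrank k (Wfilt d 1) + 1 ∧
      (∀ v ∈ Wfilt d 2, d v = 0 → v ∈ Wfilt d 1) ∧
      Submodule.map d (Wfilt d 2) = lambdaTwo (Wfilt d 1)) := by
  -- The filtration cannot stabilize at level 1.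
  have hstab : Wfilt d 2 ≠ Wfilt d 1 := by
    intro h
    obtain ⟨N, hN⟩ := hmin
    match N with
    | 0 =>
      have : finrank k V = 0 := by
        have : (⊥ : Submodule k V) = ⊤ := hN
        have h0 := finrank_bot k V
        rw [this, finrank_top] at h0
        omega
      omega
    | n + 1 =>
      exact hne (by rw [← Wfilt_stab d h n, hN])
  constructor
  · -- dim W₁ ≥ 2
    by_contra hlt
    push_neg at hlt
    have hle : finrank k (Wfilt d 1) ≤ 1 := by omega
    have hrank : Module.rank k (Wfilt d 1) ≤ 1 := by
      rw [← finrank_eq_rank]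
      exact_mod_cast hle
    obtain ⟨w, hw⟩ := (rank_submodule_le_one_iff' _).mp hrank
    have hbot : lambdaTwo (Wfilt d 1) = ⊥ := lambdaTwo_eq_bot_of_le_span hw
    apply hstab
    show Submodule.comap d (lambdaTwo (Wfilt d 1)) = Wfilt d 1
    rw [hbot, Wfilt_one]
    rfl
  · intro h2
    obtain ⟨x, y, hxy⟩ := span_pair_of_finrank_two h2
    set z := ι k x * ι k y with hz
    have hL2 : lambdaTwo (Wfilt d 1) = k ∙ z := by rw [hxy, lambdaTwo_span_pair]
    -- image of W₂ under d
    have hmaple : Submodule.map d (Wfilt d 2) ≤ k ∙ z := by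
      rw [← hL2]
      exact Submodule.map_comap_le d _
    have hmapne : Submodule.map d (Wfilt d 2) ≠ ⊥ := by
      intro hb
      apply hstab
      refine le_antisymm ?_ (Wfilt_one_le_two d)
      intro v hv
      rw [Wfilt_one, LinearMap.mem_ker]
      have : d v ∈ Submodule.map d (Wfilt d 2) := Submodule.mem_map_of_mem hv
      rw [hb] at this
      exact this
    have hmapeq : Submodule.map d (Wfilt d 2) = k ∙ z := by
      obtain ⟨v, hv, hv0⟩ := Submodule.exists_mem_ne_zero_of_ne_bot hmapne
      obtain ⟨c, hc⟩ := Submodule.mem_span_singleton.mp (hmaple hv)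
      have hc0 : c ≠ 0 := by
        rintro rfl; rw [zero_smul] at hc; exact hv0 hc.symm
      refine le_antisymm hmaple ?_
      rw [Submodule.span_singleton_le_iff_mem]
      have : z = c⁻¹ • v := by rw [← hc, smul_smul, inv_mul_cancel₀ hc0, one_smul]
      rw [this]
      exact Submodule.smul_mem _ _ hv
    have hz0 : z ≠ 0 := by
      intro hzz
      rw [hzz, Submodule.span_zero_singleton] at hmapeq
      exact hmapne hmapeq
    refine ⟨?_, ?_, ?_⟩
    · -- finrank W₂ = 3
      have hrn := LinearMap.finrank_range_add_finrank_ker (d.domRestrict (Wfilt d 2))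
      rw [LinearMap.range_domRestrict, hmapeq, finrank_span_singleton hz0,
        LinearMap.ker_domRestrict] at hrn
      have hker : LinearMap.ker d ≤ Wfilt d 2 := by
        rw [← Wfilt_one]; exact Wfilt_one_le_two d
      have hkeq : finrank k (Submodule.comap (Wfilt d 2).subtype (LinearMap.ker d))
          = finrank k (Wfilt d 1) := by
        rw [Wfilt_one]
        exact LinearEquiv.finrank_eq (Submodule.comapSubtypeEquivOfLe hker)
      rw [hkeq, h2] at hrn
      omega
    · intro v hv hdv
      rw [Wfilt_one, LinearMap.mem_ker]
      exact hdv
    · rw [hmapeq, hL2]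
end

section
/- In the exterior algebra Λ(x₁,…,x₆) over Q with differential dx₁ = dx₂ = dx₃ = 0, dx₄ = x₁x₂, dx₅ = x₁x₄, dx₆ = x₂x₄ (the Chevalley–Eilenberg complex of L_{5,5} ⊕ A₁), there is no closed 2-form ω with ω³ ≠ 0; i.e., the corresponding nilmanifold admits no invariant symplectic form. -/
open ExteriorAlgebra

/-- The degree-1 generators `x₁, …, x₆` of the exterior algebra `Λ(x₁,…,x₆)` over `ℚ`
(indexed `0, …, 5`). -/
noncomputable def xg (i : Fin 6) : ExteriorAlgebra ℚ (Fin 6 → ℚ) :=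
  ι ℚ (Pi.single i 1)

lemma gswap (u v : Fin 6 → ℚ) : ι ℚ v * ι ℚ u = -(ι ℚ u * ι ℚ v) :=
  eq_neg_of_add_eq_zero_left (ι_add_mul_swap v u)

lemma sq0 (u v : Fin 6 → ℚ) : (ι ℚ u * ι ℚ v) * (ι ℚ u * ι ℚ v) = 0 := by
  have h : ι ℚ v * (ι ℚ u * ι ℚ v) = 0 := by
    rw [← mul_assoc, gswap u v, neg_mul, mul_assoc, ι_sq_zero, mul_zero, neg_zero]
  rw [mul_assoc, h, mul_zero]

lemma move2 (p q r : Fin 6 → ℚ) : ι ℚ p * (ι ℚ q * ι ℚ r) = ι ℚ q * (ι ℚ r * ι ℚ p) := by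
  rw [← mul_assoc, gswap q p, neg_mul, mul_assoc, gswap r p, mul_neg, neg_neg]

lemma comm2 (u v w z : Fin 6 → ℚ) :
    (ι ℚ u * ι ℚ v) * (ι ℚ w * ι ℚ z) = (ι ℚ w * ι ℚ z) * (ι ℚ u * ι ℚ v) := by
  rw [mul_assoc, mul_assoc, move2 v w z, ← mul_assoc, gswap w u, neg_mul, mul_assoc,
    ← mul_assoc (ι ℚ u), gswap z u, neg_mul, mul_assoc, mul_neg, neg_neg]

lemma xg_sq (i : Fin 6) : xg i * xg i = 0 := ι_sq_zero _

lemma iota_eq_sum (u : Fin 6 → ℚ) : ι ℚ u = ∑ i, u i • xg i := by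
  conv_lhs => rw [← Finset.univ_sum_single u]
  rw [map_sum]
  refine Finset.sum_congr rfl fun i _ => ?_
  rw [xg, ← map_smul]
  congr 1
  ext j
  by_cases h : j = i <;> simp [Pi.single_apply, h]

lemma span2 : ⋀[ℚ]^2 (Fin 6 → ℚ) ≤
    Submodule.span ℚ (Set.range fun p : Fin 6 × Fin 6 => xg p.1 * xg p.2) := by
  rw [← ιMulti_span_fixedDegree]
  rw [Submodule.span_le]
  rintro _ ⟨v, rfl⟩
  rw [ιMulti_apply]
  simp only [List.ofFn_succ, List.prod_cons, List.ofFn_zero, List.prod_nil, mul_one,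
    Fin.succ_zero_eq_one]
  rw [iota_eq_sum (v 0), iota_eq_sum (v 1), Finset.sum_mul]
  refine Submodule.sum_mem _ fun i _ => ?_
  rw [Finset.mul_sum]
  refine Submodule.sum_mem _ fun j _ => ?_
  rw [smul_mul_assoc, mul_smul_comm]
  exact Submodule.smul_mem _ _ (Submodule.smul_mem _ _
    (Submodule.subset_span ⟨(i, j), rfl⟩))

noncomputable def trip (s : Fin 3 → Fin 6) : (Fin 6 → ℚ) [⋀^Fin 3]→ₗ[ℚ] ℚ :=
  (Matrix.detRowAlternating).compLinearMap (LinearMap.funLeft ℚ ℚ s)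

noncomputable def phiF (s : Fin 3 → Fin 6) : ∀ i : ℕ, (Fin 6 → ℚ) [⋀^Fin i]→ₗ[ℚ] ℚ
  | 3 => trip s
  | _ => 0

noncomputable def phi (s : Fin 3 → Fin 6) :
    ExteriorAlgebra ℚ (Fin 6 → ℚ) →ₗ[ℚ] ℚ := liftAlternating (phiF s)

lemma phi_triple (s : Fin 3 → Fin 6) (u v w : Fin 6 → ℚ) :
    phi s (ι ℚ u * ι ℚ v * ι ℚ w) = trip s ![u, v, w] := by
  have h := liftAlternating_apply_ιMulti (phiF s) (n := 3) ![u, v, w]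
  rw [ιMulti_apply] at h
  simp [List.ofFn_succ, List.prod_cons, mul_assoc] at h ⊢
  exact h

lemma phi_xg (s : Fin 3 → Fin 6) (a b c : Fin 6) :
    phi s (xg a * xg b * xg c) =
      Matrix.det !![(if s 0 = a then (1:ℚ) else 0), (if s 1 = a then 1 else 0), (if s 2 = a then 1 else 0);
        (if s 0 = b then 1 else 0), (if s 1 = b then 1 else 0), (if s 2 = b then 1 else 0);
        (if s 0 = c then 1 else 0), (if s 1 = c then 1 else 0), (if s 2 = c then 1 else 0)] := by
  rw [xg, xg, xg, phi_triple, trip]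
  rw [AlternatingMap.compLinearMap_apply]
  rw [Matrix.detRowAlternating]
  congr 1
  ext i j
  fin_cases i <;> fin_cases j <;>
    simp [LinearMap.funLeft_apply, Pi.single_apply, Matrix.of_apply]

lemma phi_val (i j k a b c : Fin 6) :
    phi ![i, j, k] (xg a * xg b * xg c) =
      (if i = a then (1:ℚ) else 0) *
          ((if j = b then (1:ℚ) else 0) * (if k = c then 1 else 0) -
            (if k = b then (1:ℚ) else 0) * (if j = c then 1 else 0)) -
      (if j = a then (1:ℚ) else 0) *
          ((if i = b then (1:ℚ) else 0) * (if k = c then 1 else 0) -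
            (if k = b then (1:ℚ) else 0) * (if i = c then 1 else 0)) +
      (if k = a then (1:ℚ) else 0) *
          ((if i = b then (1:ℚ) else 0) * (if j = c then 1 else 0) -
            (if j = b then (1:ℚ) else 0) * (if i = c then 1 else 0)) := by
  rw [phi_xg, Matrix.det_fin_three]
  simp only [Matrix.cons_val', Matrix.cons_val_zero, Matrix.cons_val_one, Matrix.head_cons,
    Matrix.empty_val', Matrix.cons_val_fin_one, Matrix.head_fin_const, Matrix.cons_val_two,
    Matrix.tail_cons, Matrix.of_apply]
  simp only [eq_comm (a := i), eq_comm (a := j), eq_comm (a := k)]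
  simp only [eq_comm (b := i), eq_comm (b := j), eq_comm (b := k)]
  ring

set_option maxHeartbeats 2000000 in
/-- In `Λ(x₁,…,x₆)` over `ℚ` with differential `dx₁ = dx₂ = dx₃ = 0`,
`dx₄ = x₁x₂`, `dx₅ = x₁x₄`, `dx₆ = x₂x₄` (the Chevalley–Eilenberg complex of
`L_{5,5} ⊕ A₁`; `D` is any linear map satisfying the Leibniz rule for degree-1 elements
with these values on generators), there is no closed 2-form `ω` with `ω³ ≠ 0`: every
`ω ∈ Λ²` with `Dω = 0` has `ω³ = 0`.  Hence the corresponding nilmanifold admits no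
invariant symplectic form. -/
theorem not_symplectic_L55_A1
    (D : ExteriorAlgebra ℚ (Fin 6 → ℚ) →ₗ[ℚ] ExteriorAlgebra ℚ (Fin 6 → ℚ))
    (hD : ∀ v w : Fin 6 → ℚ, D (ι ℚ v * ι ℚ w) = D (ι ℚ v) * ι ℚ w - ι ℚ v * D (ι ℚ w))
    (h1 : D (xg 0) = 0) (h2 : D (xg 1) = 0) (h3 : D (xg 2) = 0)
    (h4 : D (xg 3) = xg 0 * xg 1) (h5 : D (xg 4) = xg 0 * xg 3)
    (h6 : D (xg 5) = xg 1 * xg 3) :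
    ∀ ω ∈ ⋀[ℚ]^2 (Fin 6 → ℚ), D ω = 0 → ω ^ 3 = 0 := by
  intro ω hω hDω
  obtain ⟨c, hc⟩ := (Submodule.mem_span_range_iff_exists_fun ℚ).mp (span2 hω)
  rw [← hc, map_sum] at hDω
  have hDij : ∀ i j : Fin 6, D (xg i * xg j) = D (xg i) * xg j - xg i * D (xg j) :=
    fun i j => hD _ _
  simp only [map_smul, hDij, h1, h2, h3, h4, h5, h6, Fintype.sum_prod_type,
    Fin.sum_univ_six, zero_mul, mul_zero, zero_sub, sub_zero, sub_self, smul_zero,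
    smul_neg, zero_add, add_zero] at hDω
  have e1 := congrArg (phi ![0,1,2]) hDω
  have e2 := congrArg (phi ![0,2,3]) hDω
  have e3 := congrArg (phi ![1,2,3]) hDω
  have e4 := congrArg (phi ![0,1,4]) hDω
  have e5 := congrArg (phi ![0,1,5]) hDω
  have e6 := congrArg (phi ![0,3,5]) hDω
  simp only [map_add, map_neg, map_smul, map_sub, map_zero, ← mul_assoc, phi_val]
    at e1 e2 e3 e4 e5 e6
  simp at e1 e2 e3 e4 e5 e6
  have w10 : xg 1 * xg 0 = -(xg 0 * xg 1) := gswap _ _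
  have w20 : xg 2 * xg 0 = -(xg 0 * xg 2) := gswap _ _
  have w21 : xg 2 * xg 1 = -(xg 1 * xg 2) := gswap _ _
  have w30 : xg 3 * xg 0 = -(xg 0 * xg 3) := gswap _ _
  have w31 : xg 3 * xg 1 = -(xg 1 * xg 3) := gswap _ _
  have w32 : xg 3 * xg 2 = -(xg 2 * xg 3) := gswap _ _
  have w40 : xg 4 * xg 0 = -(xg 0 * xg 4) := gswap _ _
  have w41 : xg 4 * xg 1 = -(xg 1 * xg 4) := gswap _ _
  have w42 : xg 4 * xg 2 = -(xg 2 * xg 4) := gswap _ _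
  have w43 : xg 4 * xg 3 = -(xg 3 * xg 4) := gswap _ _
  have w50 : xg 5 * xg 0 = -(xg 0 * xg 5) := gswap _ _
  have w51 : xg 5 * xg 1 = -(xg 1 * xg 5) := gswap _ _
  have w52 : xg 5 * xg 2 = -(xg 2 * xg 5) := gswap _ _
  have w53 : xg 5 * xg 3 = -(xg 3 * xg 5) := gswap _ _
  have w54 : xg 5 * xg 4 = -(xg 4 * xg 5) := gswap _ _
  have hω2 : ω = xg 0 * ι ℚ (fun i => c (0, i) - c (i, 0)) +
      xg 1 * ι ℚ (fun i => if i = 0 then 0 else c (1, i) - c (i, 1)) := by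
    rw [← hc, iota_eq_sum, iota_eq_sum, Finset.mul_sum, Finset.mul_sum]
    simp only [Fintype.sum_prod_type, Fin.sum_univ_six, mul_smul_comm]
    simp only [w10, w20, w21, w30, w31, w32, w40, w41, w42, w43, w50, w51, w52, w53, w54, xg_sq, smul_zero, smul_neg, mul_zero, zero_add, add_zero,
      neg_neg, neg_zero]
    simp only [show ((2:Fin 6) = 0) = False by simp, show ((3:Fin 6) = 0) = False by simp,
      show ((4:Fin 6) = 0) = False by simp, show ((5:Fin 6) = 0) = False by simp,
      if_false, if_true]
    match_scalars <;> linarith [e1, e2, e3, e4, e5, e6]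
  have hA2 : (xg 0 * ι ℚ (fun i => c (0, i) - c (i, 0))) *
      (xg 0 * ι ℚ (fun i => c (0, i) - c (i, 0))) = 0 := sq0 _ _
  have hB2 : (xg 1 * ι ℚ (fun i => if i = 0 then 0 else c (1, i) - c (i, 1))) *
      (xg 1 * ι ℚ (fun i => if i = 0 then 0 else c (1, i) - c (i, 1))) = 0 := sq0 _ _
  have hcom : Commute (xg 0 * ι ℚ (fun i => c (0, i) - c (i, 0)))
      (xg 1 * ι ℚ (fun i => if i = 0 then 0 else c (1, i) - c (i, 1))) := comm2 _ _ _ _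
  rw [hω2, Commute.add_pow hcom]
  simp [Finset.sum_range_succ, pow_succ, pow_zero, one_mul, hA2, hB2]
end

section
/- Let (ΛV, d) be a minimal algebra over a field k (char ≠ 2), let (A,d), (B,d) be CDGAs, f : (ΛV,d) → (A,d) a CDGA morphism, and π : (B,d) → (A,d) a surjective quasi-isomorphism. Then there exists a CDGA morphism g : (ΛV,d) → (B,d) with π ∘ g = f; moreover if f is a quasi-isomorphism then so is g. -/
/-- A (graded-)commutative differential graded algebra over a field `k`: an ℕ-graded
associative unital `k`-algebra, graded-commutative, equipped with a degree `+1`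
differential `d` with `d² = 0` satisfying the graded Leibniz rule. -/
structure CDGA (k : Type) [Field k] where
  carrier : Type
  [ring : Ring carrier]
  [alg : Algebra k carrier]
  grading : ℕ → Submodule k carrier
  graded : GradedAlgebra grading
  gcomm : ∀ (i j : ℕ) (a b : carrier), a ∈ grading i → b ∈ grading j →
    a * b = ((-1 : ℤ) ^ (i * j)) • (b * a)
  d : carrier →ₗ[k] carrier
  d_deg : ∀ (n : ℕ) (a : carrier), a ∈ grading n → d a ∈ grading (n + 1)
  d_sq : ∀ a : carrier, d (d a) = 0
  leibniz : ∀ (i : ℕ) (a b : carrier), a ∈ grading i →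
    d (a * b) = d a * b + ((-1 : ℤ) ^ i) • (a * d b)

attribute [instance] CDGA.ring CDGA.alg
attribute [instance] CDGA.graded

variable {k : Type} [Field k]

open scoped DirectSum
open Classical DirectSum

noncomputable section

namespace CDGA

variable (X Y : CDGA k)

/-- homogeneous projection -/
def p (n : ℕ) : X.carrier →ₗ[k] X.carrier := GradedAlgebra.proj X.grading n

lemma p_mem (n : ℕ) (a : X.carrier) : X.p n a ∈ X.grading n := by
  rw [p, GradedAlgebra.proj_apply]; exact SetLike.coe_mem _

lemma p_of_mem {n : ℕ} {a : X.carrier} (h : a ∈ X.grading n) : X.p n a = a := by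
  rw [p, GradedAlgebra.proj_apply, DirectSum.decompose_of_mem_same _ h]

lemma p_of_mem_ne {m n : ℕ} {a : X.carrier} (h : a ∈ X.grading m) (hmn : m ≠ n) :
    X.p n a = 0 := by
  rw [p, GradedAlgebra.proj_apply, DirectSum.decompose_of_mem_ne _ h hmn]

lemma sum_p (a : X.carrier) :
    ∑ n ∈ (DirectSum.decompose X.grading a).support, X.p n a = a := by
  simp only [p, GradedAlgebra.proj_apply]
  exact DirectSum.sum_support_decompose _ a

variable {X Y}

lemma d_one : X.d 1 = 0 := by
  have := X.leibniz 0 1 1 (SetLike.one_mem_graded _)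
  simpa using this

lemma proj_comm (F : X.carrier →ₗ[k] Y.carrier) (r : ℕ)
    (hF : ∀ (m : ℕ) (a : X.carrier), a ∈ X.grading m → F a ∈ Y.grading (m + r))
    (n : ℕ) (a : X.carrier) :
    Y.p (n + r) (F a) = F (X.p n a) := by
  conv_lhs => rw [← X.sum_p a]
  rw [map_sum, map_sum, Finset.sum_eq_single n]
  · exact Y.p_of_mem (hF n _ (X.p_mem n a))
  · intro m _ hmn
    exact Y.p_of_mem_ne (hF m _ (X.p_mem m a)) (by omega)
  · intro hn
    have : X.p n a = 0 := by
      rw [p, GradedAlgebra.proj_apply]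
      simp [DFinsupp.notMem_support_iff.mp hn]
    rw [this, map_zero, map_zero]

lemma proj_comm_d (n : ℕ) (a : X.carrier) : X.p (n + 1) (X.d a) = X.d (X.p n a) :=
  proj_comm X.d 1 X.d_deg n a

lemma proj_comm_alg (F : X.carrier →ₐ[k] Y.carrier)
    (hF : ∀ (m : ℕ) (a : X.carrier), a ∈ X.grading m → F a ∈ Y.grading m)
    (n : ℕ) (a : X.carrier) :
    Y.p n (F a) = F (X.p n a) := by
  have := proj_comm F.toLinearMap 0 (fun m a h => by simpa using hF m a h) n a
  simpa using this

lemma p_mul (n : ℕ) (a b : X.carrier) :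
    X.p n (a * b) = ∑ ij ∈ ((DirectSum.decompose X.grading a).support ×ˢ
      (DirectSum.decompose X.grading b).support).filter
        (fun ij : ℕ × ℕ => ij.1 + ij.2 = n),
      (X.p ij.1 a) * (X.p ij.2 b) := by
  simp only [p, GradedAlgebra.proj_apply]
  rw [DirectSum.decompose_mul, DirectSum.coe_mul_apply]

/-- algebra homs sending homogeneous generators to elements of the same degree
preserve the grading on the adjoined subalgebra -/
lemma hom_grading {ι : Type} (φ : X.carrier →ₐ[k] Y.carrier) (g : ι → X.carrier)
    (dg : ι → ℕ) (hg : ∀ i, g i ∈ X.grading (dg i))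
    (hφ : ∀ i, φ (g i) ∈ Y.grading (dg i)) :
    ∀ a ∈ Algebra.adjoin k (Set.range g), ∀ n, φ (X.p n a) ∈ Y.grading n := by
  intro a ha
  induction ha using Algebra.adjoin_induction with
  | mem x hx =>
    obtain ⟨i, rfl⟩ := hx
    intro n
    by_cases hn : dg i = n
    · subst hn; rw [X.p_of_mem (hg i)]; exact hφ i
    · rw [X.p_of_mem_ne (hg i) hn, map_zero]; exact zero_mem _
  | algebraMap r =>
    intro n
    have h0 : (algebraMap k X.carrier) r ∈ X.grading 0 := SetLike.algebraMap_mem_graded _ r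
    by_cases hn : 0 = n
    · subst hn
      rw [X.p_of_mem h0]
      simpa using (SetLike.algebraMap_mem_graded Y.grading r : _)
    · rw [X.p_of_mem_ne h0 hn, map_zero]; exact zero_mem _
  | add x y hx hy ihx ihy =>
    intro n
    rw [map_add, map_add]
    exact add_mem (ihx n) (ihy n)
  | mul x y hx hy ihx ihy =>
    intro n
    rw [p_mul, map_sum]
    refine Submodule.sum_mem _ fun ij hij => ?_
    have hcond := (Finset.mem_filter.mp hij).2
    rw [map_mul]
    have := SetLike.mul_mem_graded (ihx ij.1) (ihy ij.2)
    rwa [hcond] at this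

lemma hom_grading_top {ι : Type} (φ : X.carrier →ₐ[k] Y.carrier) (g : ι → X.carrier)
    (dg : ι → ℕ) (hg : ∀ i, g i ∈ X.grading (dg i))
    (hφ : ∀ i, φ (g i) ∈ Y.grading (dg i))
    (hgen : Algebra.adjoin k (Set.range g) = ⊤) :
    ∀ (n : ℕ) (a : X.carrier), a ∈ X.grading n → φ a ∈ Y.grading n := by
  intro n a ha
  have := hom_grading φ g dg hg hφ a (hgen ▸ Algebra.mem_top) n
  rwa [X.p_of_mem ha] at this

/-- an algebra hom that preserves grading and commutes with `d` on homogeneous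
generators commutes with `d` on the adjoined subalgebra -/
lemma hom_d {ι : Type} (φ : X.carrier →ₐ[k] Y.carrier)
    (hgr : ∀ (n : ℕ) (a : X.carrier), a ∈ X.grading n → φ a ∈ Y.grading n)
    (g : ι → X.carrier) (dg : ι → ℕ) (hg : ∀ i, g i ∈ X.grading (dg i))
    (hcomm : ∀ i, Y.d (φ (g i)) = φ (X.d (g i))) :
    ∀ a ∈ Algebra.adjoin k (Set.range g), Y.d (φ a) = φ (X.d a) := by
  have key : ∀ a ∈ Algebra.adjoin k (Set.range g), ∀ n,
      Y.d (φ (X.p n a)) = φ (X.d (X.p n a)) := by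
    intro a ha
    induction ha using Algebra.adjoin_induction with
    | mem x hx =>
      obtain ⟨i, rfl⟩ := hx
      intro n
      by_cases hn : dg i = n
      · subst hn; rw [X.p_of_mem (hg i)]; exact hcomm i
      · rw [X.p_of_mem_ne (hg i) hn]; simp
    | algebraMap r =>
      intro n
      have h0 : (algebraMap k X.carrier) r ∈ X.grading 0 := SetLike.algebraMap_mem_graded _ r
      by_cases hn : 0 = n
      · subst hn
        rw [X.p_of_mem h0]
        have h1 : (algebraMap k X.carrier) r = r • (1 : X.carrier) :=
          (Algebra.algebraMap_eq_smul_one r)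
        have h2 : (φ ((algebraMap k X.carrier) r)) = (algebraMap k Y.carrier) r := by simp
        rw [h1]; simp [d_one]
      · rw [X.p_of_mem_ne h0 hn]; simp
    | add x y hx hy ihx ihy =>
      intro n
      rw [map_add, map_add, map_add, map_add, ihx n, ihy n, map_add]
    | mul x y hx hy ihx ihy =>
      intro n
      rw [p_mul, map_sum, map_sum, map_sum, map_sum]
      refine Finset.sum_congr rfl fun ij _ => ?_
      set u := X.p ij.1 x with hu
      set v := X.p ij.2 y with hv
      have hum : u ∈ X.grading ij.1 := X.p_mem _ _
      have hvm : v ∈ X.grading ij.2 := X.p_mem _ _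
      have hL : Y.d (φ (u * v)) = Y.d (φ u) * φ v +
          ((-1 : ℤ) ^ ij.1) • (φ u * Y.d (φ v)) := by
        rw [map_mul]
        exact Y.leibniz ij.1 (φ u) (φ v) (hgr ij.1 u hum)
      have hR : φ (X.d (u * v)) = φ (X.d u) * φ v +
          ((-1 : ℤ) ^ ij.1) • (φ u * φ (X.d v)) := by
        rw [X.leibniz ij.1 u v hum, map_add, map_mul, map_zsmul, map_mul]
      rw [hL, hR, ihx ij.1, ihy ij.2]
  intro a ha
  conv_lhs => rw [← X.sum_p a]
  conv_rhs => rw [← X.sum_p a]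
  rw [map_sum, map_sum, map_sum, map_sum]
  exact Finset.sum_congr rfl fun n _ => key a ha n

end CDGA

end


variable {k : Type} [Field k]

/-- A morphism of CDGAs: an algebra homomorphism preserving the grading and
commuting with the differentials. -/
structure CDGAHom (X Y : CDGA k) where
  hom : X.carrier →ₐ[k] Y.carrier
  map_grading : ∀ (n : ℕ) (a : X.carrier), a ∈ X.grading n → hom a ∈ Y.grading n
  map_d : ∀ a : X.carrier, hom (X.d a) = Y.d (hom a)

/-- A CDGA morphism is a quasi-isomorphism if it induces an isomorphism on all
cohomology groups: every closed element of the target is, modulo exact ones, the image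
of a closed element of the source (surjectivity on cohomology), and a closed element of
the source whose image is exact is itself exact (injectivity on cohomology). -/
def CDGAHom.IsQuasiIso {X Y : CDGA k} (f : CDGAHom X Y) : Prop :=
  ∀ n : ℕ,
    (∀ y ∈ Y.grading n ⊓ LinearMap.ker Y.d,
      ∃ x ∈ X.grading n ⊓ LinearMap.ker X.d, y - f.hom x ∈ LinearMap.range Y.d) ∧
    (∀ x ∈ X.grading n ⊓ LinearMap.ker X.d,
      f.hom x ∈ LinearMap.range Y.d → x ∈ LinearMap.range X.d)

/-- A minimal algebra over `k`: a CDGA which is free as a graded-commutative algebra on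
a well-ordered family of homogeneous generators of positive degree (freeness is
expressed by the universal property of prescribing images of the generators), such that
the differential of each generator lies in the subalgebra generated by the earlier
generators (in particular `d` has no linear part). -/
structure MinimalCDGA (k : Type) [Field k] extends CDGA k where
  idx : Type
  [linOrd : LinearOrder idx]
  wf : WellFoundedLT idx
  gen : idx → carrier
  deg : idx → ℕ
  deg_pos : ∀ i, 1 ≤ deg i
  gen_mem : ∀ i, gen i ∈ grading (deg i)
  generates : Algebra.adjoin k (Set.range gen) = ⊤
  free : ∀ (B : CDGA k) (y : idx → B.carrier), (∀ i, y i ∈ B.grading (deg i)) →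
    ∃! φ : carrier →ₐ[k] B.carrier, ∀ i, φ (gen i) = y i
  d_earlier : ∀ i : idx, d (gen i) ∈ Algebra.adjoin k (gen '' {j | j < i})

attribute [instance] MinimalCDGA.linOrd MinimalCDGA.wf

noncomputable section Lift

variable (M : MinimalCDGA k) (A B : CDGA k)

/-- the algebra hom determined by prescribed images of the generators -/
def homOf (w : M.idx → B.carrier) (hw : ∀ j, w j ∈ B.grading (M.deg j)) :
    M.carrier →ₐ[k] B.carrier := (M.free B w hw).choose

lemma homOf_gen (w : M.idx → B.carrier) (hw : ∀ j, w j ∈ B.grading (M.deg j)) (j : M.idx) :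
    homOf M B w hw (M.gen j) = w j := (M.free B w hw).choose_spec.1 j

variable {M B}

/-- two algebra homs agreeing on earlier generators agree on `d (gen i)` -/
lemma hom_agree_earlier (φ ψ : M.carrier →ₐ[k] B.carrier) (i : M.idx)
    (h : ∀ j, j < i → φ (M.gen j) = ψ (M.gen j)) :
    φ (M.d (M.gen i)) = ψ (M.d (M.gen i)) := by
  have hle : Algebra.adjoin k (M.gen '' {j | j < i}) ≤ AlgHom.equalizer φ ψ := by
    apply AlgHom.adjoin_le_equalizer
    rintro _ ⟨j, hj, rfl⟩
    exact h j hj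
  exact hle (M.d_earlier i)

variable (f : CDGAHom M.toCDGA A) (π : CDGAHom B A)
variable {A}

lemma key_exists (hπsurj : Function.Surjective π.hom) (hπ : π.IsQuasiIso)
    (w : M.idx → B.carrier) (hw : ∀ j, w j ∈ B.grading (M.deg j))
    (φ : M.carrier →ₐ[k] B.carrier) (hφgen : ∀ j, φ (M.gen j) = w j)
    (i : M.idx)
    (hπw : ∀ j, j < i → π.hom (w j) = f.hom (M.gen j))
    (hdw : ∀ j, j < i → B.d (w j) = φ (M.d (M.gen j))) :
    ∃ b, b ∈ B.grading (M.deg i) ∧ π.hom b = f.hom (M.gen i) ∧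
      B.d b = φ (M.d (M.gen i)) := by
  classical
  set n := M.deg i with hn
  set z := φ (M.d (M.gen i)) with hz
  have hgrφ : ∀ (m : ℕ) (a : M.carrier), a ∈ M.grading m → φ a ∈ B.grading m := by
    refine CDGA.hom_grading_top φ M.gen M.deg M.gen_mem (fun j => ?_) M.generates
    rw [hφgen j]; exact hw j
  set s : Set M.carrier := M.gen '' {j | j < i} with hs
  have hrange : s = Set.range (fun j : {j : M.idx // j < i} => M.gen j.1) :=
    Set.image_eq_range _ _
  have hπφ : ∀ a ∈ Algebra.adjoin k s, π.hom (φ a) = f.hom a := by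
    intro a ha
    have hle : Algebra.adjoin k s ≤ AlgHom.equalizer ((π.hom).comp φ) f.hom := by
      apply AlgHom.adjoin_le_equalizer
      rintro _ ⟨j, hj, rfl⟩
      show π.hom (φ (M.gen j)) = f.hom (M.gen j)
      rw [hφgen j, hπw j hj]
    exact hle ha
  have hdφ : ∀ a ∈ Algebra.adjoin k s, B.d (φ a) = φ (M.d a) := by
    have H := CDGA.hom_d φ hgrφ (fun j : {j : M.idx // j < i} => M.gen j.1)
      (fun j => M.deg j.1) (fun j => M.gen_mem j.1)
      (fun j => by rw [hφgen j.1]; exact (hdw j.1 j.2).symm ▸ (hdw j.1 j.2))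
    intro a ha
    exact H a (by rwa [← hrange])
  have hdmem : M.d (M.gen i) ∈ Algebra.adjoin k s := M.d_earlier i
  have hz1 : z ∈ B.grading (n + 1) := hgrφ _ _ (M.d_deg n _ (M.gen_mem i))
  have hz2 : B.d z = 0 := by
    rw [hz, hdφ _ hdmem, M.d_sq, map_zero]
  have hz3 : π.hom z = A.d (f.hom (M.gen i)) := by
    rw [hz, hπφ _ hdmem, f.map_d]
  -- step 1 : homogeneous preimage of `f (gen i)`
  obtain ⟨u, hu⟩ := hπsurj (f.hom (M.gen i))
  set b0 := CDGA.p B n u with hb0def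
  have hb0m : b0 ∈ B.grading n := CDGA.p_mem B n u
  have hπb0 : π.hom b0 = f.hom (M.gen i) := by
    have h := CDGA.proj_comm_alg π.hom π.map_grading n u
    rw [hu, A.p_of_mem (f.map_grading n _ (M.gen_mem i))] at h
    exact h.symm
  -- step 2 : the obstruction `z - d b0` is exact
  have hobm : z - B.d b0 ∈ B.grading (n + 1) ⊓ LinearMap.ker B.d :=
    Submodule.mem_inf.mpr ⟨sub_mem hz1 (B.d_deg n b0 hb0m), by
      rw [LinearMap.mem_ker, map_sub, hz2, B.d_sq, sub_zero]⟩
  have hobπ : π.hom (z - B.d b0) = 0 := by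
    rw [map_sub, hz3, π.map_d, hπb0, sub_self]
  obtain ⟨c', hc'⟩ := (hπ (n + 1)).2 _ hobm ⟨0, by rw [map_zero, hobπ]⟩
  set c := CDGA.p B n c' with hcdef
  have hcm : c ∈ B.grading n := CDGA.p_mem B n c'
  have hdc : B.d c = z - B.d b0 := by
    have h := CDGA.proj_comm_d (X := B) n c'
    rw [hc', B.p_of_mem (Submodule.mem_inf.mp hobm).1] at h
    exact h.symm
  -- step 3 : fix the image
  have hπcm : π.hom c ∈ A.grading n ⊓ LinearMap.ker A.d :=
    Submodule.mem_inf.mpr ⟨π.map_grading n c hcm, by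
      rw [LinearMap.mem_ker, ← π.map_d, hdc, hobπ]⟩
  obtain ⟨x, hx, hxr⟩ := (hπ n).1 _ hπcm
  obtain ⟨a0, ha0⟩ := hxr
  have hxm : x ∈ B.grading n := (Submodule.mem_inf.mp hx).1
  have hxd : B.d x = 0 := LinearMap.mem_ker.mp (Submodule.mem_inf.mp hx).2
  have hn1 : n - 1 + 1 = n := Nat.succ_pred_eq_of_pos (M.deg_pos i)
  have hsubm : π.hom c - π.hom x ∈ A.grading n :=
    sub_mem (π.map_grading n c hcm) (π.map_grading n x hxm)
  have ha0' : A.d (CDGA.p A (n - 1) a0) = π.hom c - π.hom x := by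
    have h := CDGA.proj_comm_d (X := A) (n - 1) a0
    rw [hn1, ha0, A.p_of_mem hsubm] at h
    exact h.symm
  obtain ⟨v, hv⟩ := hπsurj (CDGA.p A (n - 1) a0)
  set b' := CDGA.p B (n - 1) v with hb'def
  have hπb' : π.hom b' = CDGA.p A (n - 1) a0 := by
    have h := CDGA.proj_comm_alg π.hom π.map_grading (n - 1) v
    rw [hv, A.p_of_mem (CDGA.p_mem A (n - 1) a0)] at h
    exact h.symm
  refine ⟨b0 + c - x - B.d b', ?_, ?_, ?_⟩
  · have hb'd : B.d b' ∈ B.grading n := hn1 ▸ B.d_deg (n - 1) b' (CDGA.p_mem B (n - 1) v)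
    exact sub_mem (sub_mem (add_mem hb0m hcm) hxm) hb'd
  · rw [map_sub, map_sub, map_add, hπb0, π.map_d, hπb', ha0']
    abel
  · rw [map_sub, map_sub, map_add, hdc, hxd, B.d_sq]
    abel

/-- images for the generators below `i` -/
def wOf {M : MinimalCDGA k} {B : CDGA k} (i : M.idx) (rec : ∀ j, j < i → B.carrier) :
    M.idx → B.carrier :=
  fun j => if h : j < i then CDGA.p B (M.deg j) (rec j h) else 0

lemma wOf_mem {M : MinimalCDGA k} {B : CDGA k} (i : M.idx) (rec : ∀ j, j < i → B.carrier) :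
    ∀ j, wOf i rec j ∈ B.grading (M.deg j) := by
  intro j
  by_cases h : j < i
  · simp only [wOf, dif_pos h]; exact CDGA.p_mem B _ _
  · simp only [wOf, dif_neg h]; exact zero_mem _

open Classical in
/-- one step of the transfinite construction -/
def Ybody (i : M.idx) (rec : ∀ j, j < i → B.carrier) : B.carrier :=
  if h : ∃ b, b ∈ B.grading (M.deg i) ∧ π.hom b = f.hom (M.gen i) ∧
      B.d b = homOf M B (wOf i rec) (wOf_mem i rec) (M.d (M.gen i)) then h.choose else 0

/-- the lift on generators, by transfinite recursion -/
def Yfun : M.idx → B.carrier :=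
  WellFounded.fix wellFounded_lt (Ybody f π)

lemma Yfun_eq (i : M.idx) : Yfun f π i = Ybody f π i (fun j _ => Yfun f π j) :=
  WellFounded.fix_eq _ _ _

lemma Yfun_spec (hπsurj : Function.Surjective π.hom) (hπ : π.IsQuasiIso) :
    ∀ i : M.idx,
      Yfun f π i ∈ B.grading (M.deg i) ∧ π.hom (Yfun f π i) = f.hom (M.gen i) ∧
      B.d (Yfun f π i) = homOf M B (wOf i (fun j _ => Yfun f π j))
        (wOf_mem i (fun j _ => Yfun f π j)) (M.d (M.gen i)) := by
  intro i
  refine wellFounded_lt.induction (C := fun i => Yfun f π i ∈ B.grading (M.deg i) ∧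
      π.hom (Yfun f π i) = f.hom (M.gen i) ∧
      B.d (Yfun f π i) = homOf M B (wOf i (fun j _ => Yfun f π j))
        (wOf_mem i (fun j _ => Yfun f π j)) (M.d (M.gen i))) i ?_
  intro i IH
  have hex : ∃ b, b ∈ B.grading (M.deg i) ∧ π.hom b = f.hom (M.gen i) ∧
      B.d b = homOf M B (wOf i (fun j _ => Yfun f π j))
        (wOf_mem i (fun j _ => Yfun f π j)) (M.d (M.gen i)) := by
    refine key_exists f π hπsurj hπ _ (wOf_mem i _) _ (homOf_gen M B _ _) i ?_ ?_
    · intro j hj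
      have hWj : wOf i (fun j' _ => Yfun f π j') j = Yfun f π j := by
        simp only [wOf, dif_pos hj]; exact B.p_of_mem (IH j hj).1
      rw [hWj]; exact (IH j hj).2.1
    · intro j hj
      have hWj : wOf i (fun j' _ => Yfun f π j') j = Yfun f π j := by
        simp only [wOf, dif_pos hj]; exact B.p_of_mem (IH j hj).1
      rw [hWj, (IH j hj).2.2]
      refine hom_agree_earlier _ _ j (fun j' hj' => ?_)
      rw [homOf_gen, homOf_gen]
      simp only [wOf, dif_pos hj', dif_pos (lt_trans hj' hj)]
  rw [Yfun_eq]
  unfold Ybody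
  rw [dif_pos hex]
  exact hex.choose_spec

end Lift

/-- Let `(ΛV, d)` be a minimal algebra over a field `k` with
`char k ≠ 2`, `(A, d)`, `(B, d)` CDGAs, `f : (ΛV, d) → (A, d)` a CDGA morphism and
`π : (B, d) → (A, d)` a surjective quasi-isomorphism.  Then `f` lifts to a CDGA
morphism `g : (ΛV, d) → (B, d)` with `π ∘ g = f`; moreover if `f` is a
quasi-isomorphism then so is `g`. -/
theorem minimal_lifting_surjective (k : Type) [Field k] (hk : (2 : k) ≠ 0)
    (M : MinimalCDGA k) (A B : CDGA k)
    (f : CDGAHom M.toCDGA A) (π : CDGAHom B A)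
    (hπsurj : Function.Surjective π.hom) (hπ : π.IsQuasiIso) :
    ∃ g : CDGAHom M.toCDGA B,
      (∀ a : M.carrier, π.hom (g.hom a) = f.hom a) ∧
      (f.IsQuasiIso → g.IsQuasiIso) := by
  classical
  have spec := Yfun_spec f π hπsurj hπ
  set Y := Yfun f π with hY
  have hYmem : ∀ j, Y j ∈ B.grading (M.deg j) := fun j => (spec j).1
  set g0 := homOf M B Y hYmem with hg0
  have hg0gen : ∀ j, g0 (M.gen j) = Y j := homOf_gen M B Y hYmem
  have hgrad : ∀ (n : ℕ) (a : M.carrier), a ∈ M.grading n → g0 a ∈ B.grading n :=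
    CDGA.hom_grading_top g0 M.gen M.deg M.gen_mem (fun j => (hg0gen j) ▸ hYmem j)
      M.generates
  have hcomm : ∀ i, B.d (g0 (M.gen i)) = g0 (M.d (M.gen i)) := by
    intro i
    rw [hg0gen i, (spec i).2.2]
    refine hom_agree_earlier _ _ i (fun j hj => ?_)
    rw [homOf_gen, hg0gen j]
    simp only [wOf, dif_pos hj]
    exact B.p_of_mem (hYmem j)
  have hd : ∀ a, g0 (M.d a) = B.d (g0 a) := fun a =>
    (CDGA.hom_d g0 hgrad M.gen M.deg M.gen_mem hcomm a
      (by rw [M.generates]; trivial)).symm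
  refine ⟨⟨g0, hgrad, hd⟩, ?_, ?_⟩
  · intro a
    have hle : Algebra.adjoin k (Set.range M.gen) ≤ AlgHom.equalizer (π.hom.comp g0) f.hom :=
      AlgHom.adjoin_le_equalizer _ _ (by
        rintro _ ⟨j, rfl⟩
        show π.hom (g0 (M.gen j)) = f.hom (M.gen j)
        rw [hg0gen j]; exact (spec j).2.1)
    exact hle (by rw [M.generates]; trivial)
  · intro hf n
    have hπg : ∀ a, π.hom (g0 a) = f.hom a := by
      intro a
      have hle : Algebra.adjoin k (Set.range M.gen) ≤
          AlgHom.equalizer (π.hom.comp g0) f.hom :=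
        AlgHom.adjoin_le_equalizer _ _ (by
          rintro _ ⟨j, rfl⟩
          show π.hom (g0 (M.gen j)) = f.hom (M.gen j)
          rw [hg0gen j]; exact (spec j).2.1)
      exact hle (by rw [M.generates]; trivial)
    constructor
    · intro y hy
      have hyg : y ∈ B.grading n := (Submodule.mem_inf.mp hy).1
      have hyd : B.d y = 0 := LinearMap.mem_ker.mp (Submodule.mem_inf.mp hy).2
      have hπy : π.hom y ∈ A.grading n ⊓ LinearMap.ker A.d :=
        Submodule.mem_inf.mpr ⟨π.map_grading n y hyg, by
          rw [LinearMap.mem_ker, ← π.map_d, hyd, map_zero]⟩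
      obtain ⟨x, hx, hxr⟩ := (hf n).1 _ hπy
      refine ⟨x, hx, ?_⟩
      have hxg : x ∈ M.grading n := (Submodule.mem_inf.mp hx).1
      have hxd : M.d x = 0 := LinearMap.mem_ker.mp (Submodule.mem_inf.mp hx).2
      have hmem : y - g0 x ∈ B.grading n ⊓ LinearMap.ker B.d :=
        Submodule.mem_inf.mpr ⟨sub_mem hyg (hgrad n x hxg), by
          rw [LinearMap.mem_ker, map_sub, hyd, ← hd x, hxd, map_zero, sub_zero]⟩
      have hπr : π.hom (y - g0 x) ∈ LinearMap.range A.d := by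
        rw [map_sub, hπg x]; exact hxr
      exact (hπ n).2 _ hmem hπr
    · intro x hx hgx
      have hfx : f.hom x ∈ LinearMap.range A.d := by
        obtain ⟨b, hb⟩ := hgx
        exact ⟨π.hom b, by rw [← π.map_d, hb, hπg x]⟩
      exact (hf n).2 _ hx hfx
end

section
/- Let (ΛV, d) be a minimal algebra generated in degree 1 over a field k (char ≠ 2), (A,d), (B,d) CDGAs with A⁰ = k, f : (ΛV,d) → (A,d) a CDGA morphism, and ψ : (B,d) → (A,d) a quasi-isomorphism (not necessarily surjective). Then there exists a CDGA morphism g : (ΛV,d) → (B,d) with ψ ∘ g = f; if f is a quasi-isomorphism, so is g. -/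
variable {k : Type} [Field k]

attribute [instance] CDGA.graded MinimalCDGA.linOrd

section Aux

/-- the differential kills `1`. -/
lemma CDGA.d_one_s18 (C : CDGA k) : C.d 1 = 0 := by
  have h := C.leibniz 0 1 1 (SetLike.one_mem_graded C.grading)
  simp only [one_mul, mul_one, pow_zero, one_smul] at h
  have : C.d 1 + 0 = C.d 1 + C.d 1 := by rw [add_zero]; exact h
  exact (add_left_cancel this).symm

/-- A linear map raising degrees by `r` on a spanning set of homogeneous elements
commutes with the corresponding projections, on the span. -/
lemma decompose_comm {C D : CDGA k} (T : C.carrier →ₗ[k] D.carrier) (r : ℕ)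
    (S : Set C.carrier)
    (hT : ∀ s ∈ S, ∃ m, s ∈ C.grading m ∧ T s ∈ D.grading (m + r)) :
    ∀ x ∈ Submodule.span k S, ∀ n,
      T (DirectSum.decompose C.grading x n : C.carrier)
        = (DirectSum.decompose D.grading (T x) (n + r) : D.carrier) := by
  intro x hx
  induction hx using Submodule.span_induction with
  | mem s hs =>
      obtain ⟨m, hm, hTm⟩ := hT s hs
      intro n
      by_cases h : m = n
      · subst h
        rw [DirectSum.decompose_of_mem_same _ hm, DirectSum.decompose_of_mem_same _ hTm]
      · rw [DirectSum.decompose_of_mem_ne _ hm h, map_zero,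
          DirectSum.decompose_of_mem_ne _ hTm (by omega)]
  | zero => intro n; simp
  | add a b ha hb iha ihb =>
      intro n
      simp only [DirectSum.decompose_add, DirectSum.add_apply, Submodule.coe_add,
        LinearMap.map_add]
      rw [iha n, ihb n]
  | smul c a ha ih =>
      intro n
      simp only [DirectSum.decompose_smul, DirectSum.smul_apply, SetLike.val_smul,
        LinearMap.map_smul]
      rw [ih n]

lemma mem_grading_of_decompose {C D : CDGA k} (T : C.carrier →ₗ[k] D.carrier) (r : ℕ)
    (S : Set C.carrier)
    (hT : ∀ s ∈ S, ∃ m, s ∈ C.grading m ∧ T s ∈ D.grading (m + r))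
    {x : C.carrier} (hx : x ∈ Submodule.span k S) {n : ℕ} (hxn : x ∈ C.grading n) :
    T x ∈ D.grading (n + r) := by
  have h := decompose_comm T r S hT x hx n
  rw [DirectSum.decompose_of_mem_same _ hxn] at h
  rw [h]
  exact SetLike.coe_mem _

/-- homogeneous elements span everything. -/
lemma span_homogeneous_top (C : CDGA k) :
    Submodule.span k (⋃ n, (C.grading n : Set C.carrier)) = ⊤ := by
  classical
  rw [eq_top_iff]
  intro x _
  rw [← DirectSum.sum_support_decompose C.grading x]
  exact Submodule.sum_mem _ fun n _ =>
    Submodule.subset_span (Set.mem_iUnion.2 ⟨n, SetLike.coe_mem _⟩)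

lemma d_decompose (C : CDGA k) (x : C.carrier) (n : ℕ) :
    C.d (DirectSum.decompose C.grading x n : C.carrier)
      = (DirectSum.decompose C.grading (C.d x) (n + 1) : C.carrier) := by
  refine decompose_comm C.d 1 (⋃ m, (C.grading m : Set C.carrier)) ?_ x ?_ n
  · intro s hs
    obtain ⟨m, hm⟩ := Set.mem_iUnion.1 hs
    exact ⟨m, hm, C.d_deg m s hm⟩
  · rw [span_homogeneous_top]; trivial

lemma algHom_eqOn_adjoin {R A B : Type*} [CommSemiring R] [Semiring A] [Semiring B]
    [Algebra R A] [Algebra R B] (φ ρ : A →ₐ[R] B) {s : Set A}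
    (h : ∀ x ∈ s, φ x = ρ x) : ∀ a ∈ Algebra.adjoin R s, φ a = ρ a := by
  intro a ha
  induction ha using Algebra.adjoin_induction with
  | mem x hx => exact h x hx
  | algebraMap r => simp
  | add x y hx hy ihx ihy => simp [ihx, ihy]
  | mul x y hx hy ihx ihy => simp [ihx, ihy]

end Aux

section Mono

variable (M : MinimalCDGA k) (B : CDGA k)

/-- On monomials in generators from `T`, an algebra hom sending the relevant
generators into degree 1 and commuting with `d` on them is degreewise and commutes
with `d`. -/
lemma mono_prop (hM : ∀ i : M.idx, M.deg i = 1) (φ : M.carrier →ₐ[k] B.carrier)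
    (T : Set M.idx)
    (hY : ∀ j ∈ T, φ (M.gen j) ∈ B.grading 1)
    (hD : ∀ j ∈ T, φ (M.toCDGA.d (M.gen j)) = B.d (φ (M.gen j))) :
    ∀ m ∈ Submonoid.closure (M.gen '' T),
      (∃ n, m ∈ M.grading n ∧ φ m ∈ B.grading n) ∧
      φ (M.toCDGA.d m) = B.d (φ m) := by
  intro m hm
  induction hm using Submonoid.closure_induction with
  | mem x hx =>
      obtain ⟨j, hj, rfl⟩ := hx
      refine ⟨⟨1, ?_, hY j hj⟩, hD j hj⟩
      have := M.gen_mem j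
      rwa [hM j] at this
  | one =>
      refine ⟨⟨0, SetLike.one_mem_graded _, by rw [map_one]; exact SetLike.one_mem_graded _⟩, ?_⟩
      rw [CDGA.d_one_s18, map_zero, map_one, CDGA.d_one_s18]
  | mul a b ha hb iha ihb =>
      obtain ⟨⟨na, hma, hfa⟩, hda⟩ := iha
      obtain ⟨⟨nb, hmb, hfb⟩, hdb⟩ := ihb
      constructor
      · exact ⟨na + nb, SetLike.mul_mem_graded hma hmb,
          by rw [map_mul]; exact SetLike.mul_mem_graded hfa hfb⟩
      · rw [M.toCDGA.leibniz na a b hma, map_add, map_mul, map_zsmul, map_mul,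
          hda, hdb, map_mul, B.leibniz na _ _ hfa]

end Mono

section Adjoin

variable (M : MinimalCDGA k) (B : CDGA k)

lemma adjoin_comm_d (hM : ∀ i : M.idx, M.deg i = 1) (φ : M.carrier →ₐ[k] B.carrier)
    (T : Set M.idx)
    (hY : ∀ j ∈ T, φ (M.gen j) ∈ B.grading 1)
    (hD : ∀ j ∈ T, φ (M.toCDGA.d (M.gen j)) = B.d (φ (M.gen j))) :
    ∀ a ∈ Algebra.adjoin k (M.gen '' T), φ (M.toCDGA.d a) = B.d (φ a) := by
  intro a ha
  have ha' : a ∈ Submodule.span k ((Submonoid.closure (M.gen '' T) : Submonoid M.carrier)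
      : Set M.carrier) := by
    rw [← Algebra.adjoin_eq_span]; exact ha
  clear ha
  induction ha' using Submodule.span_induction with
  | mem s hs => exact (mono_prop M B hM φ T hY hD s hs).2
  | zero => simp
  | add x y hx hy ihx ihy => rw [map_add, map_add, map_add, map_add, ihx, ihy]
  | smul c x hx ih => rw [map_smul, map_smul, map_smul, map_smul, ih]

lemma adjoin_grading (hM : ∀ i : M.idx, M.deg i = 1) (φ : M.carrier →ₐ[k] B.carrier)
    (T : Set M.idx)
    (hY : ∀ j ∈ T, φ (M.gen j) ∈ B.grading 1)
    (hD : ∀ j ∈ T, φ (M.toCDGA.d (M.gen j)) = B.d (φ (M.gen j)))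
    {a : M.carrier} (ha : a ∈ Algebra.adjoin k (M.gen '' T)) {n : ℕ}
    (han : a ∈ M.grading n) : φ a ∈ B.grading n := by
  have ha' : a ∈ Submodule.span k ((Submonoid.closure (M.gen '' T) : Submonoid M.carrier)
      : Set M.carrier) := by
    rw [← Algebra.adjoin_eq_span]; exact ha
  have := mem_grading_of_decompose (φ.toLinearMap) 0 _ ?_ ha' han
  · simpa using this
  · intro s hs
    obtain ⟨m, hm, hfm⟩ := (mono_prop M B hM φ T hY hD s hs).1
    exact ⟨m, hm, by simpa using hfm⟩

end Adjoin


section Lift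

variable (M : MinimalCDGA k) (A B : CDGA k) (f : CDGAHom M.toCDGA A) (ψ : CDGAHom B A)

open Classical in
lemma fix_mem (y : M.idx → B.carrier) :
    ∀ i, (if y i ∈ B.grading (M.deg i) then y i else 0) ∈ B.grading (M.deg i) := by
  intro i
  split
  · assumption
  · exact zero_mem _

open Classical in
/-- The algebra hom determined by prescribed images of the generators (coerced into the
right degree). -/
noncomputable def mkAlgHom (y : M.idx → B.carrier) : M.carrier →ₐ[k] B.carrier :=
  (M.free B (fun i => if y i ∈ B.grading (M.deg i) then y i else 0) (fix_mem M B y)).choose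

open Classical in
lemma mkAlgHom_gen (y : M.idx → B.carrier) (i : M.idx) :
    mkAlgHom M B y (M.gen i) = if y i ∈ B.grading (M.deg i) then y i else 0 :=
  (M.free B (fun i => if y i ∈ B.grading (M.deg i) then y i else 0)
    (fix_mem M B y)).choose_spec.1 i

lemma mkAlgHom_gen_of_mem (y : M.idx → B.carrier) {i : M.idx}
    (h : y i ∈ B.grading (M.deg i)) : mkAlgHom M B y (M.gen i) = y i := by
  rw [mkAlgHom_gen, if_pos h]

open Classical in
/-- The recursively constructed images of the generators. -/
noncomputable def liftGen : M.idx → B.carrier :=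
  M.wf.wf.fix fun i rec =>
    let yprev : M.idx → B.carrier := fun j => if h : j < i then rec j h else 0
    let c : B.carrier := mkAlgHom M B yprev (M.toCDGA.d (M.gen i))
    if h : ∃ b, b ∈ B.grading 1 ∧ B.d b = c ∧ ψ.hom b = f.hom (M.gen i)
    then h.choose else 0

open Classical in
lemma liftGen_eq (i : M.idx) :
    liftGen M A B f ψ i =
      (if h : ∃ b, b ∈ B.grading 1 ∧
          B.d b = mkAlgHom M B (fun j => if _ : j < i then liftGen M A B f ψ j else 0)
            (M.toCDGA.d (M.gen i)) ∧
          ψ.hom b = f.hom (M.gen i)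
       then h.choose else 0) :=
  M.wf.wf.fix_eq _ i

end Lift


section Spec

variable (M : MinimalCDGA k) (A B : CDGA k) (f : CDGAHom M.toCDGA A) (ψ : CDGAHom B A)

lemma liftGen_spec (hM : ∀ i : M.idx, M.deg i = 1)
    (hA : A.grading 0 = Submodule.span k {(1 : A.carrier)}) (hψ : ψ.IsQuasiIso) :
    ∀ i : M.idx, liftGen M A B f ψ i ∈ B.grading 1 ∧
      B.d (liftGen M A B f ψ i)
        = mkAlgHom M B (liftGen M A B f ψ) (M.toCDGA.d (M.gen i)) ∧
      ψ.hom (liftGen M A B f ψ i) = f.hom (M.gen i) := by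
  intro i
  refine M.wf.wf.induction (C := fun i => liftGen M A B f ψ i ∈ B.grading 1 ∧
      B.d (liftGen M A B f ψ i)
        = mkAlgHom M B (liftGen M A B f ψ) (M.toCDGA.d (M.gen i)) ∧
      ψ.hom (liftGen M A B f ψ i) = f.hom (M.gen i)) i ?_
  clear i; intro i IH
  have hYg : ∀ j, j < i → liftGen M A B f ψ j ∈ B.grading 1 := fun j hj => (IH j hj).1
  have hΦgen : ∀ j, j < i →
      mkAlgHom M B (liftGen M A B f ψ) (M.gen j) = liftGen M A B f ψ j := fun j hj =>
    mkAlgHom_gen_of_mem M B _ (by rw [hM j]; exact hYg j hj)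
  have hprevgen : ∀ j, j < i →
      mkAlgHom M B (fun j => if _ : j < i then liftGen M A B f ψ j else 0) (M.gen j)
        = liftGen M A B f ψ j := by
    intro j hj
    rw [mkAlgHom_gen, dif_pos hj, if_pos (by rw [hM j]; exact hYg j hj)]
  have hagree : ∀ a ∈ Algebra.adjoin k (M.gen '' {j | j < i}),
      mkAlgHom M B (fun j => if _ : j < i then liftGen M A B f ψ j else 0) a
        = mkAlgHom M B (liftGen M A B f ψ) a := by
    apply algHom_eqOn_adjoin
    rintro x ⟨j, hj, rfl⟩
    rw [hprevgen j hj, hΦgen j hj]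
  have hc_eq : mkAlgHom M B (fun j => if _ : j < i then liftGen M A B f ψ j else 0)
      (M.toCDGA.d (M.gen i))
        = mkAlgHom M B (liftGen M A B f ψ) (M.toCDGA.d (M.gen i)) :=
    hagree _ (M.d_earlier i)
  have hY' : ∀ j ∈ {j | j < i}, mkAlgHom M B (liftGen M A B f ψ) (M.gen j) ∈ B.grading 1 := by
    intro j hj; rw [hΦgen j hj]; exact hYg j hj
  have hD' : ∀ j ∈ {j | j < i},
      mkAlgHom M B (liftGen M A B f ψ) (M.toCDGA.d (M.gen j))
        = B.d (mkAlgHom M B (liftGen M A B f ψ) (M.gen j)) := by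
    intro j hj; rw [hΦgen j hj]; exact ((IH j hj).2.1).symm
  have hc_closed : B.d (mkAlgHom M B (liftGen M A B f ψ) (M.toCDGA.d (M.gen i))) = 0 := by
    have h1 := adjoin_comm_d M B hM (mkAlgHom M B (liftGen M A B f ψ)) {j | j < i} hY' hD'
      (M.toCDGA.d (M.gen i)) (M.d_earlier i)
    rw [M.toCDGA.d_sq, map_zero] at h1
    exact h1.symm
  have hc_mem : mkAlgHom M B (liftGen M A B f ψ) (M.toCDGA.d (M.gen i)) ∈ B.grading 2 := by
    have hm2 : M.toCDGA.d (M.gen i) ∈ M.grading 2 := by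
      have h := M.toCDGA.d_deg (M.deg i) (M.gen i) (M.gen_mem i)
      rw [hM i] at h
      exact h
    exact adjoin_grading M B hM _ {j | j < i} hY' hD' (M.d_earlier i) hm2
  have hψΦ : ∀ a ∈ Algebra.adjoin k (M.gen '' {j | j < i}),
      (ψ.hom.comp (mkAlgHom M B (liftGen M A B f ψ))) a = f.hom a := by
    apply algHom_eqOn_adjoin
    rintro x ⟨j, hj, rfl⟩
    rw [AlgHom.comp_apply, hΦgen j hj, (IH j hj).2.2]
  have hψc : ψ.hom (mkAlgHom M B (liftGen M A B f ψ) (M.toCDGA.d (M.gen i)))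
      = A.d (f.hom (M.gen i)) := by
    have h := hψΦ _ (M.d_earlier i)
    rw [AlgHom.comp_apply] at h
    rw [h, f.map_d]
  -- the lifted closed element of degree 2 is exact in B
  obtain ⟨b₀, hb₀⟩ := (hψ 2).2 _
    (Submodule.mem_inf.2 ⟨hc_mem, LinearMap.mem_ker.2 hc_closed⟩)
    ⟨f.hom (M.gen i), hψc.symm⟩
  -- project the primitive into degree 1
  have hb_mem : (DirectSum.decompose B.grading b₀ 1 : B.carrier) ∈ B.grading 1 :=
    SetLike.coe_mem _
  have hb_d : B.d (DirectSum.decompose B.grading b₀ 1 : B.carrier)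
      = mkAlgHom M B (liftGen M A B f ψ) (M.toCDGA.d (M.gen i)) := by
    rw [d_decompose, hb₀, DirectSum.decompose_of_mem_same _ hc_mem]
  -- correct by a closed degree-1 element so that ψ matches f on the generator
  have hw_mem : ψ.hom (DirectSum.decompose B.grading b₀ 1 : B.carrier) - f.hom (M.gen i)
      ∈ A.grading 1 := by
    refine sub_mem (ψ.map_grading 1 _ hb_mem) (f.map_grading 1 _ ?_)
    have h := M.gen_mem i
    rwa [hM i] at h
  have hw_closed : A.d (ψ.hom (DirectSum.decompose B.grading b₀ 1 : B.carrier)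
      - f.hom (M.gen i)) = 0 := by
    rw [map_sub, ← ψ.map_d, hb_d, hψc, sub_self]
  obtain ⟨b', hb'mem, a0, ha0⟩ := (hψ 1).1 _
    (Submodule.mem_inf.2 ⟨hw_mem, LinearMap.mem_ker.2 hw_closed⟩)
  have hb'1 : b' ∈ B.grading 1 := (Submodule.mem_inf.1 hb'mem).1
  have hb'closed : B.d b' = 0 := LinearMap.mem_ker.1 (Submodule.mem_inf.1 hb'mem).2
  have hψb' : ψ.hom b' = ψ.hom (DirectSum.decompose B.grading b₀ 1 : B.carrier)
      - f.hom (M.gen i) := by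
    have hmem1 : ψ.hom (DirectSum.decompose B.grading b₀ 1 : B.carrier) - f.hom (M.gen i)
        - ψ.hom b' ∈ A.grading 1 := sub_mem hw_mem (ψ.map_grading 1 b' hb'1)
    have h2 : A.d (DirectSum.decompose A.grading a0 0 : A.carrier)
        = ψ.hom (DirectSum.decompose B.grading b₀ 1 : B.carrier) - f.hom (M.gen i)
          - ψ.hom b' := by
      rw [d_decompose, ha0, DirectSum.decompose_of_mem_same _ hmem1]
    have hmem0 : (DirectSum.decompose A.grading a0 0 : A.carrier)
        ∈ Submodule.span k {(1 : A.carrier)} := by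
      rw [← hA]; exact SetLike.coe_mem _
    obtain ⟨r, hr⟩ := Submodule.mem_span_singleton.1 hmem0
    have h3 : ψ.hom (DirectSum.decompose B.grading b₀ 1 : B.carrier) - f.hom (M.gen i)
        - ψ.hom b' = 0 := by
      rw [← h2, ← hr, map_smul, CDGA.d_one_s18 A, smul_zero]
    have := sub_eq_zero.1 h3
    exact this.symm
  -- the witness
  have hex : ∃ b, b ∈ B.grading 1 ∧
      B.d b = mkAlgHom M B (fun j => if _ : j < i then liftGen M A B f ψ j else 0)
        (M.toCDGA.d (M.gen i)) ∧
      ψ.hom b = f.hom (M.gen i) := by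
    refine ⟨(DirectSum.decompose B.grading b₀ 1 : B.carrier) - b', sub_mem hb_mem hb'1, ?_, ?_⟩
    · rw [map_sub, hb_d, hb'closed, sub_zero, hc_eq]
    · rw [map_sub, hψb', sub_sub_cancel]
  rw [liftGen_eq M A B f ψ i, dif_pos hex]
  obtain ⟨h1, h2, h3⟩ := hex.choose_spec
  exact ⟨h1, by rw [h2, hc_eq], h3⟩

end Spec


/-- Let `(ΛV, d)` be a minimal algebra generated in degree 1 over a
field `k` with `char k ≠ 2`, `(A, d)`, `(B, d)` CDGAs with `A⁰ = k` (only scalars in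
degree 0), `f : (ΛV, d) → (A, d)` a CDGA morphism and `ψ : (B, d) → (A, d)` a
quasi-isomorphism (not necessarily surjective).  Then there exists a CDGA morphism
`g : (ΛV, d) → (B, d)` with `ψ ∘ g = f`; if `f` is a quasi-isomorphism, so is `g`. -/
theorem minimal_lifting_degree_one (k : Type) [Field k] (hk : (2 : k) ≠ 0)
    (M : MinimalCDGA k) (hM : ∀ i : M.idx, M.deg i = 1)
    (A B : CDGA k) (hA : A.grading 0 = Submodule.span k {(1 : A.carrier)})
    (f : CDGAHom M.toCDGA A) (ψ : CDGAHom B A) (hψ : ψ.IsQuasiIso) :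
    ∃ g : CDGAHom M.toCDGA B,
      (∀ a : M.carrier, ψ.hom (g.hom a) = f.hom a) ∧
      (f.IsQuasiIso → g.IsQuasiIso) := by
  have spec := liftGen_spec M A B f ψ hM hA hψ
  have hgen : ∀ i, mkAlgHom M B (liftGen M A B f ψ) (M.gen i) = liftGen M A B f ψ i :=
    fun i => mkAlgHom_gen_of_mem M B _ (by rw [hM i]; exact (spec i).1)
  have hY' : ∀ j ∈ (Set.univ : Set M.idx),
      mkAlgHom M B (liftGen M A B f ψ) (M.gen j) ∈ B.grading 1 := by
    intro j _; rw [hgen j]; exact (spec j).1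
  have hD' : ∀ j ∈ (Set.univ : Set M.idx),
      mkAlgHom M B (liftGen M A B f ψ) (M.toCDGA.d (M.gen j))
        = B.d (mkAlgHom M B (liftGen M A B f ψ) (M.gen j)) := by
    intro j _; rw [hgen j]; exact ((spec j).2.1).symm
  have htop : ∀ a : M.carrier, a ∈ Algebra.adjoin k (M.gen '' Set.univ) := by
    intro a; rw [Set.image_univ, M.generates]; trivial
  have hmapd : ∀ a : M.carrier,
      mkAlgHom M B (liftGen M A B f ψ) (M.toCDGA.d a)
        = B.d (mkAlgHom M B (liftGen M A B f ψ) a) := fun a =>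
    adjoin_comm_d M B hM _ Set.univ hY' hD' a (htop a)
  have hmapg : ∀ (n : ℕ) (a : M.carrier), a ∈ M.grading n →
      mkAlgHom M B (liftGen M A B f ψ) a ∈ B.grading n := fun n a ha =>
    adjoin_grading M B hM _ Set.univ hY' hD' (htop a) ha
  set g : CDGAHom M.toCDGA B := ⟨mkAlgHom M B (liftGen M A B f ψ), hmapg, hmapd⟩ with hg
  have hcomp : ∀ a : M.carrier, ψ.hom (g.hom a) = f.hom a := by
    have h := algHom_eqOn_adjoin (ψ.hom.comp g.hom) f.hom
      (s := M.gen '' Set.univ) ?_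
    · intro a
      have := h a (htop a)
      rwa [AlgHom.comp_apply] at this
    · rintro x ⟨j, _, rfl⟩
      rw [AlgHom.comp_apply]
      show ψ.hom (mkAlgHom M B (liftGen M A B f ψ) (M.gen j)) = f.hom (M.gen j)
      rw [hgen j]; exact (spec j).2.2
  refine ⟨g, hcomp, ?_⟩
  intro hf n
  constructor
  · intro y hy
    obtain ⟨hy1, hy2'⟩ := Submodule.mem_inf.1 hy
    have hy2 : B.d y = 0 := LinearMap.mem_ker.1 hy2'
    have hψy : ψ.hom y ∈ A.grading n ⊓ LinearMap.ker A.d :=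
      Submodule.mem_inf.2 ⟨ψ.map_grading n y hy1,
        LinearMap.mem_ker.2 (by rw [← ψ.map_d, hy2, map_zero])⟩
    obtain ⟨x, hx, hfx⟩ := (hf n).1 _ hψy
    obtain ⟨hx1, hx2'⟩ := Submodule.mem_inf.1 hx
    have hx2 : M.toCDGA.d x = 0 := LinearMap.mem_ker.1 hx2'
    refine ⟨x, hx, ?_⟩
    have hgx0 : B.d (g.hom x) = 0 := by rw [← g.map_d x, hx2, map_zero]
    refine (hψ n).2 _ (Submodule.mem_inf.2 ⟨sub_mem hy1 (g.map_grading n x hx1),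
      LinearMap.mem_ker.2 (by rw [map_sub, hy2, hgx0, sub_zero])⟩) ?_
    rw [map_sub, hcomp x]
    exact hfx
  · intro x hx hrange
    obtain ⟨b, hb⟩ := hrange
    refine (hf n).2 x hx ⟨ψ.hom b, ?_⟩
    rw [← ψ.map_d, hb, hcomp x]
end
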